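/- Let w ∈ M_{t,+}^+ \ M_t^⊥ and let A, B ∈ G(M_t; M_{t,+}) be such that A ≠ ∅ whenever cl[B + G_t^M(w)] = M_t, and B ≠ ∅ whenever cl[A + G_t^M(w)] = M_t. Then G_t^M(w) −. cl[A + B] = cl[ (G_t^M(w) −. A) + (G_t^M(w) −. B) ]. -/

import Mathlib

open MeasureTheory Set Filter
open scoped ENNReal Pointwise

noncomputable section

namespace MultiRisk

/-- The ambient context: a filtered probability space on `[0,T]` satisfying the usual
conditions with `ℱ T = m0`, dimensions `d` and `em ≤ d` (the number of eligible assets),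
and conjugate exponents `p, q ∈ [1,∞]`. -/
structure Ctx (Ω : Type*) where
  m0 : MeasurableSpace Ω
  P : @MeasureTheory.Measure Ω m0
  probP : @MeasureTheory.IsProbabilityMeasure Ω m0 P
  d : ℕ
  em : ℕ
  em_pos : 1 ≤ em
  em_le : em ≤ d
  p : ℝ≥0∞
  hp : 1 ≤ p
  q : ℝ≥0∞
  hpq : 1 / p + 1 / q = 1
  T : ℝ
  hT : 0 ≤ T
  F : @MeasureTheory.Filtration Ω ℝ _ m0
  hFT : F T = m0
  /-- usual conditions: right-continuity of the filtration -/
  right_cont : ∀ t : ℝ, F t = ⨅ s ∈ Set.Ioi t, F s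
  /-- usual conditions: completeness, `F 0` contains all `P`-null sets -/
  complete : ∀ N : Set Ω, P N = 0 → MeasurableSet[F 0] N

variable {Ω : Type*}

instance factLeP (C : Ctx Ω) : Fact (1 ≤ C.p) := ⟨C.hp⟩

/-- portfolio vectors: `ℝ^d` (with an arbitrary norm; here the sup norm). -/
abbrev EV (C : Ctx Ω) : Type _ := Fin C.d → ℝ

/-- the space `L^p(Ω, F_T, P; ℝ^d)`. -/
abbrev LpSp (C : Ctx Ω) : Type _ := MeasureTheory.Lp (α := Ω) (EV C) C.p C.P

/-- pointwise pairing `wᵀu`. -/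
def pairPt (C : Ctx Ω) (w u : Ω → EV C) (ω : Ω) : ℝ := ∑ i, w ω i * u ω i

/-- the bilinear pairing `E[wᵀu]`. -/
def pairF (C : Ctx Ω) (w u : Ω → EV C) : ℝ := ∫ ω, pairPt C w u ω ∂C.P

/-- `F_t`-measurability (in the a.e. sense) of a vector-valued function. -/
def measT (C : Ctx Ω) (t : ℝ) (v : Ω → EV C) : Prop :=
  AEStronglyMeasurable[C.F t] v C.P

/-- `F_t`-measurability (in the a.e. sense) of a scalar function. -/
def measT1 (C : Ctx Ω) (t : ℝ) (φ : Ω → ℝ) : Prop :=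
  AEStronglyMeasurable[C.F t] φ C.P

/-- the subspace `L^p_t` of `F_t`-measurable elements of `L^p`. -/
def Lpt (C : Ctx Ω) (t : ℝ) : Set (LpSp C) := {f | measT C t ⇑f}

/-- the cone `L^p_+` of a.s. componentwise nonnegative elements. -/
def LpPos (C : Ctx Ω) : Set (LpSp C) := {f | ∀ᵐ ω ∂C.P, ∀ i, 0 ≤ (⇑f : Ω → EV C) ω i}

/-- membership of a vector of `ℝ^d` in `M = ℝ^m × {0}^{d-m}`. -/
def inM (C : Ctx Ω) (x : EV C) : Prop := ∀ i : Fin C.d, C.em ≤ (i : ℕ) → x i = 0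

/-- the space `M_t` of eligible portfolios. -/
def Msp (C : Ctx Ω) (t : ℝ) : Set (LpSp C) :=
  {f | f ∈ Lpt C t ∧ ∀ᵐ ω ∂C.P, inM C ((⇑f : Ω → EV C) ω)}

/-- `M_{t,+}`. -/
def MspPos (C : Ctx Ω) (t : ℝ) : Set (LpSp C) := Msp C t ∩ LpPos C

/-- the half space `G_t(w) ⊆ L^p_t`. -/
def G (C : Ctx Ω) (t : ℝ) (w : Ω → EV C) : Set (LpSp C) :=
  {u ∈ Lpt C t | 0 ≤ pairF C w ⇑u}

/-- `G_t^M(w) = G_t(w) ∩ M_t`. -/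
def GM (C : Ctx Ω) (t : ℝ) (w : Ω → EV C) : Set (LpSp C) := G C t w ∩ Msp C t

/-- the conditional "half space" `Γ_t(w) ⊆ L^p_t`. -/
def Gam (C : Ctx Ω) (t : ℝ) (w : Ω → EV C) : Set (LpSp C) :=
  {u ∈ Lpt C t | ∀ᵐ ω ∂C.P, 0 ≤ pairPt C w ⇑u ω}

/-- `Γ_t^M(w) = Γ_t(w) ∩ M_t`. -/
def GamM (C : Ctx Ω) (t : ℝ) (w : Ω → EV C) : Set (LpSp C) := Gam C t w ∩ Msp C t

/-- Minkowski subtraction `A -. B = {m ∈ M_t : B + {m} ⊆ A}` inside `M_t`. -/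
def msub (C : Ctx Ω) (t : ℝ) (A B : Set (LpSp C)) : Set (LpSp C) :=
  {x ∈ Msp C t | ∀ b ∈ B, b + x ∈ A}

/-- the positive dual cone (in `L^q_t`, represented by functions) of a set `S ⊆ L^p`. -/
def posDual (C : Ctx Ω) (t : ℝ) (S : Set (LpSp C)) : Set (Ω → EV C) :=
  {v | MeasureTheory.MemLp v C.q C.P ∧ measT C t v ∧ ∀ u ∈ S, 0 ≤ pairF C v ⇑u}

/-- the orthogonal space `M_t^⊥ ⊆ L^q_t`. -/
def Mperp (C : Ctx Ω) (t : ℝ) : Set (Ω → EV C) :=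
  {v | MeasureTheory.MemLp v C.q C.P ∧ measT C t v ∧ ∀ u ∈ Msp C t, pairF C v ⇑u = 0}

/-- `A^+ := {v ∈ L^q : E[vᵀ Y] ≥ 0 for all Y ∈ A}`. -/
def accDual (C : Ctx Ω) (A : Set (LpSp C)) : Set (Ω → EV C) :=
  {v | MeasureTheory.MemLp v C.q C.P ∧ ∀ Y ∈ A, 0 ≤ pairF C v ⇑Y}

/-- a `d`-dimensional vector probability measure absolutely continuous w.r.t. `P`. -/
def IsVProb (C : Ctx Ω) (Q : Fin C.d → @MeasureTheory.Measure Ω C.m0) : Prop :=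
  (∀ i, @MeasureTheory.IsProbabilityMeasure Ω C.m0 (Q i)) ∧ (∀ i, Q i ≪ C.P)

/-- the density `dQ_i/dP` as a real valued function. -/
def dens (C : Ctx Ω) (Q : Fin C.d → @MeasureTheory.Measure Ω C.m0) (i : Fin C.d) (ω : Ω) : ℝ :=
  (@MeasureTheory.Measure.rnDeriv Ω C.m0 (Q i) C.P ω).toReal

/-- `ξ̄_{t,s}(Q_i)`. -/
def xibar (C : Ctx Ω) (Q : Fin C.d → @MeasureTheory.Measure Ω C.m0) (t s : ℝ) (ω : Ω)
    (i : Fin C.d) : ℝ :=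
  if 0 < MeasureTheory.condExp (C.F t) C.P (dens C Q i) ω then
    MeasureTheory.condExp (C.F s) C.P (dens C Q i) ω /
      MeasureTheory.condExp (C.F t) C.P (dens C Q i) ω
  else 1

/-- the `Q`-conditional expectation `E^Q[X | F_t]` (componentwise). -/
def condExpQ (C : Ctx Ω) (Q : Fin C.d → @MeasureTheory.Measure Ω C.m0) (t : ℝ)
    (X : Ω → EV C) : Ω → EV C :=
  fun ω i => MeasureTheory.condExp (C.F t) C.P (fun ω' => xibar C Q t C.T ω' i * X ω' i) ω

/-- `w_t^s(Q,w) = diag(w) ξ_{t,s}(Q)`. -/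
def wts (C : Ctx Ω) (Q : Fin C.d → @MeasureTheory.Measure Ω C.m0) (w : Ω → EV C)
    (t s : ℝ) : Ω → EV C :=
  fun ω i => w ω i * xibar C Q t s ω i

/-- `Q = P|_{F_t}`, i.e. `ξ_{0,t}(Q) = (1,…,1)`. -/
def restrP (C : Ctx Ω) (Q : Fin C.d → @MeasureTheory.Measure Ω C.m0) (t : ℝ) : Prop :=
  ∀ᵐ ω ∂C.P, ∀ i, xibar C Q 0 t ω i = 1

/-- the set of dual variables `W_t`. -/
def Wdual (C : Ctx Ω) (t : ℝ) :
    Set ((Fin C.d → @MeasureTheory.Measure Ω C.m0) × (Ω → EV C)) :=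
  {Qw | IsVProb C Qw.1 ∧ Qw.2 ∈ posDual C t (MspPos C t) ∧ Qw.2 ∉ Mperp C t ∧
    MeasureTheory.MemLp (wts C Qw.1 Qw.2 t C.T) C.q C.P ∧
    (∀ᵐ ω ∂C.P, ∀ i, 0 ≤ wts C Qw.1 Qw.2 t C.T ω i) ∧ restrP C Qw.1 t}

/-- `W_t^{max}` relative to an acceptance set `A`. -/
def WdualMax (C : Ctx Ω) (t : ℝ) (A : Set (LpSp C)) :
    Set ((Fin C.d → @MeasureTheory.Measure Ω C.m0) × (Ω → EV C)) :=
  {Qw ∈ Wdual C t | wts C Qw.1 Qw.2 t C.T ∈ accDual C A}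

/-- `W_t^e`: dual variables whose vector measure is equivalent to `P`. -/
def WdualE (C : Ctx Ω) (t : ℝ) :
    Set ((Fin C.d → @MeasureTheory.Measure Ω C.m0) × (Ω → EV C)) :=
  {Qw ∈ Wdual C t | ∀ i, C.P ≪ Qw.1 i}

/-- translate of a set of `L^p` elements by a (possibly non-`L^p`) function `g`. -/
def shiftSet (C : Ctx Ω) (g : Ω → EV C) (S : Set (LpSp C)) : Set (LpSp C) :=
  {u | ∃ v ∈ S, ⇑u =ᵐ[C.P] fun ω => g ω + (⇑v : Ω → EV C) ω}

/-- `(E^Q[-X|F_t] + G_t(w)) ∩ M_t`. -/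
def EQhalfG (C : Ctx Ω) (Q : Fin C.d → @MeasureTheory.Measure Ω C.m0) (t : ℝ)
    (X : Ω → EV C) (w : Ω → EV C) : Set (LpSp C) :=
  shiftSet C (condExpQ C Q t (-X)) (G C t w) ∩ Msp C t

/-- `(E^Q[-X|F_t] + Γ_t(w)) ∩ M_t`. -/
def EQhalfGam (C : Ctx Ω) (Q : Fin C.d → @MeasureTheory.Measure Ω C.m0) (t : ℝ)
    (X : Ω → EV C) (w : Ω → EV C) : Set (LpSp C) :=
  shiftSet C (condExpQ C Q t (-X)) (Gam C t w) ∩ Msp C t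

/-- the minimal penalty function `β_t(Q,w)` built from an acceptance set `A`. -/
def penalty (C : Ctx Ω) (t : ℝ) (A : Set (LpSp C))
    (Q : Fin C.d → @MeasureTheory.Measure Ω C.m0) (w : Ω → EV C) : Set (LpSp C) :=
  ⋂ Y ∈ A, EQhalfG C Q t (⇑Y) w

/-- the minimal conditional penalty function `α_t(Q,w)` built from an acceptance set `A`. -/
def condPenalty (C : Ctx Ω) (t : ℝ) (A : Set (LpSp C))
    (Q : Fin C.d → @MeasureTheory.Measure Ω C.m0) (w : Ω → EV C) : Set (LpSp C) :=
  ⋂ Y ∈ A, EQhalfGam C Q t (⇑Y) w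

/-- the elementwise conditional expectation `E^Q[S | F_t]` of a set `S ⊆ L^p`. -/
def EQset (C : Ctx Ω) (Q : Fin C.d → @MeasureTheory.Measure Ω C.m0) (t : ℝ)
    (S : Set (LpSp C)) : Set (LpSp C) :=
  {u | ∃ v ∈ S, ⇑u =ᵐ[C.P] condExpQ C Q t ⇑v}

/-- the product of a bounded measurable function with an `L^p` element. -/
def smulBdd (C : Ctx Ω) (φ : Ω → ℝ) (hφ : MeasureTheory.MemLp φ ∞ C.P) (f : LpSp C) :
    LpSp C :=
  MeasureTheory.MemLp.toLp (φ • ⇑f) ((MeasureTheory.Lp.memLp f).smul hφ)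

/-- a conditional risk measure at time `t`. -/
structure IsCRM (C : Ctx Ω) (t : ℝ) (R : LpSp C → Set (LpSp C)) : Prop where
  subM : ∀ X, R X ⊆ Msp C t
  upper : ∀ X, R X + MspPos C t = R X
  transl : ∀ X, ∀ mt ∈ Msp C t, R (X + mt) = (fun u => u - mt) '' R X
  mono : ∀ X Y : LpSp C, Y - X ∈ LpPos C → R X ⊆ R Y
  finite0 : R 0 ≠ ∅ ∧ R 0 ≠ Msp C t

/-- normalization: `R(X) = R(X) + R(0)`. -/
def Normalized (C : Ctx Ω) (R : LpSp C → Set (LpSp C)) : Prop :=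
  ∀ X, R X + R 0 = R X

/-- convexity of a set-valued risk measure. -/
def ConvexRM (C : Ctx Ω) (R : LpSp C → Set (LpSp C)) : Prop :=
  ∀ X Y : LpSp C, ∀ l : ℝ, 0 ≤ l → l ≤ 1 →
    l • R X + (1 - l) • R Y ⊆ R (l • X + (1 - l) • Y)

/-- positive homogeneity. -/
def PosHom (C : Ctx Ω) (R : LpSp C → Set (LpSp C)) : Prop :=
  ∀ X : LpSp C, ∀ l : ℝ, 0 < l → R (l • X) = l • R X

/-- conditional convexity. -/
def CondConvexRM (C : Ctx Ω) (t : ℝ) (R : LpSp C → Set (LpSp C)) : Prop :=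
  ∀ (φ ψ : Ω → ℝ) (hφ : MeasureTheory.MemLp φ ∞ C.P) (hψ : MeasureTheory.MemLp ψ ∞ C.P),
    measT1 C t φ → measT1 C t ψ →
    (∀ᵐ ω ∂C.P, 0 ≤ φ ω ∧ 0 ≤ ψ ω ∧ φ ω + ψ ω = 1) →
    ∀ X Y : LpSp C,
      smulBdd C φ hφ '' R X + smulBdd C ψ hψ '' R Y ⊆
        R (smulBdd C φ hφ X + smulBdd C ψ hψ Y)

/-- conditional positive homogeneity. -/
def CondPosHom (C : Ctx Ω) (t : ℝ) (R : LpSp C → Set (LpSp C)) : Prop :=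
  ∀ (φ : Ω → ℝ) (hφ : MeasureTheory.MemLp φ ∞ C.P), measT1 C t φ →
    (∀ᵐ ω ∂C.P, 0 < φ ω) → ∀ X : LpSp C, R (smulBdd C φ hφ X) = smulBdd C φ hφ '' R X

/-- closedness of the graph. -/
def ClosedRM (C : Ctx Ω) (R : LpSp C → Set (LpSp C)) : Prop :=
  IsClosed {z : LpSp C × LpSp C | z.2 ∈ R z.1}

/-- the image space `G(M_t; M_{t,+})`. -/
def GPlus (C : Ctx Ω) (t : ℝ) : Set (Set (LpSp C)) :=
  {D | D ⊆ Msp C t ∧ D = closure (convexHull ℝ (D + MspPos C t))}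

/-- the collection `G(M_t; M_{t,-})`. -/
def GMinus (C : Ctx Ω) (t : ℝ) : Set (Set (LpSp C)) :=
  {D | D ⊆ Msp C t ∧ D = closure (convexHull ℝ (D + -MspPos C t))}

/-- convex upper continuity. -/
def CUC (C : Ctx Ω) (t : ℝ) (R : LpSp C → Set (LpSp C)) : Prop :=
  ∀ D ∈ GMinus C t, IsClosed {X : LpSp C | (R X ∩ D).Nonempty}

/-- a conditionally convex subset of `L^p`. -/
def CondConvexSet (C : Ctx Ω) (t : ℝ) (D : Set (LpSp C)) : Prop :=
  ∀ (φ ψ : Ω → ℝ) (hφ : MeasureTheory.MemLp φ ∞ C.P) (hψ : MeasureTheory.MemLp ψ ∞ C.P),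
    measT1 C t φ → measT1 C t ψ →
    (∀ᵐ ω ∂C.P, 0 ≤ φ ω ∧ 0 ≤ ψ ω ∧ φ ω + ψ ω = 1) →
    ∀ x ∈ D, ∀ y ∈ D, smulBdd C φ hφ x + smulBdd C ψ hψ y ∈ D

/-- conditionally convex upper continuity. -/
def CCUC (C : Ctx Ω) (t : ℝ) (R : LpSp C → Set (LpSp C)) : Prop :=
  ∀ D ∈ GMinus C t, CondConvexSet C t D → IsClosed {X : LpSp C | (R X ∩ D).Nonempty}

/-- the acceptance set of a conditional risk measure. -/
def Acc (C : Ctx Ω) (R : LpSp C → Set (LpSp C)) : Set (LpSp C) := {X | 0 ∈ R X}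

/-- multiportfolio time consistency of a dynamic risk measure. -/
def MPTC (C : Ctx Ω) (R : ℝ → LpSp C → Set (LpSp C)) : Prop :=
  ∀ t s : ℝ, 0 ≤ t → t < s → s ≤ C.T → ∀ X : LpSp C, ∀ 𝒴 : Set (LpSp C),
    R s X ⊆ ⋃ Y ∈ 𝒴, R s Y → R t X ⊆ ⋃ Y ∈ 𝒴, R t Y

/-- the recession cone of a subset of `M_t`. -/
def recc (C : Ctx Ω) (t : ℝ) (S : Set (LpSp C)) : Set (LpSp C) :=
  {r ∈ Msp C t | ∀ u ∈ S, ∀ l : ℝ, 0 ≤ l → u + l • r ∈ S}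

end MultiRisk

/-!
Pairing with `w` is a continuous linear functional `φ` on `L^p`, and it does not vanish on `M_t`
because `w ∉ M_t^⊥`, so `φ` maps `M_t` onto `ℝ`. For `S ⊆ M_t`, the set `G_t^M(w) -. S` consists
of the `x ∈ M_t` such that `-φ x` is a lower bound of `φ(S)`; it is closed and does not change when
`S` is replaced by its closure. For nonempty `S, T ⊆ ℝ` the lower bounds of `S + T` are the sums of
lower bounds of `S` and of `T`, and because `φ` is onto, the preimage in `M_t` of a sum of sets is
the sum of the preimages. If `A = ∅`, both sides are `M_t`, since then `cl[B + G_t^M(w)] ≠ M_t`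
and a point `x ∈ M_t` outside it gives `-x ∈ G_t^M(w) -. B`.
-/

def dotProductL (n : ℕ) : (Fin n → ℝ) →L[ℝ] (Fin n → ℝ) →L[ℝ] ℝ :=
  ∑ i, (ContinuousLinearMap.proj i).smulRight (ContinuousLinearMap.proj i)

lemma dotProductL_apply {n : ℕ} (x y : Fin n → ℝ) : dotProductL n x y = ∑ i, x i * y i := by
  simp [dotProductL]

lemma AddSubgroup.coe_add_of_nonempty_subset {E : Type*} [AddGroup E] (M : AddSubgroup E)
    {D : Set E} (hD : D ⊆ M) (hne : D.Nonempty) : (M : Set E) + D = M := by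
  obtain ⟨d, hd⟩ := hne
  refine (add_subset_iff.2 fun x hx y hy => M.add_mem hx (hD hy)).antisymm fun x hx => ?_
  exact ⟨x - d, M.sub_mem hx (hD hd), d, hd, sub_add_cancel x d⟩

lemma AddSubgroup.inter_preimage_add_inter_preimage {E F G : Type*} [AddCommGroup E]
    [AddCommGroup F] [FunLike G E F] [AddMonoidHomClass G E F] (M : AddSubgroup E) (f : G)
    (hf : SurjOn f M univ) (U V : Set F) :
    ((M : Set E) ∩ f ⁻¹' U) + ((M : Set E) ∩ f ⁻¹' V) = (M : Set E) ∩ f ⁻¹' (U + V) := by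
  refine subset_antisymm (add_subset_iff.2 fun x hx y hy => ⟨M.add_mem hx.1 hy.1, ?_⟩) ?_
  · rw [mem_preimage, map_add]
    exact add_mem_add hx.2 hy.2
  · rintro z ⟨hzM, u, hu, v, hv, huv⟩
    obtain ⟨y, hyM, hyv⟩ := hf (mem_univ v)
    refine ⟨z - y, ⟨M.sub_mem hzM hyM, ?_⟩, y, ⟨hyM, ?_⟩, sub_add_cancel z y⟩
    · rw [mem_preimage, map_sub, ← huv, hyv, add_sub_cancel_right]
      exact hu
    · rwa [mem_preimage, hyv]

lemma Real.lowerBounds_add {S T : Set ℝ} (hS : S.Nonempty) (hT : T.Nonempty) :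
    lowerBounds (S + T) = lowerBounds S + lowerBounds T := by
  refine subset_antisymm (fun c hc => ?_) (subset_lowerBounds_add S T)
  obtain ⟨s₀, hs₀⟩ := hS
  have hTbdd : BddBelow T := ⟨c - s₀, fun y hy => by
    have := hc (add_mem_add hs₀ hy)
    linarith⟩
  refine ⟨c - sInf T, fun s hs => ?_, sInf T, fun y hy => csInf_le hTbdd hy, sub_add_cancel c _⟩
  have : c - s ≤ sInf T := le_csInf hT fun y hy => by
    have := hc (add_mem_add hs hy)
    linarith
  linarith

lemma Submodule.surjOn_of_apply_ne_zero {𝕜 E G : Type*} [Field 𝕜] [AddCommGroup E] [Module 𝕜 E]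
    [FunLike G E 𝕜] [LinearMapClass G 𝕜 E 𝕜] (M : Submodule 𝕜 E) (ψ : G) {u : E} (hu : u ∈ M)
    (hψu : ψ u ≠ 0) : SurjOn ψ M univ :=
  fun r _ => ⟨(r / ψ u) • u, M.smul_mem _ hu, by simp [hψu]⟩

namespace MultiRisk
variable {Ω : Type*}

instance holderConjugateQP (C : Ctx Ω) : ENNReal.HolderConjugate C.q C.p :=
  ENNReal.holderConjugate_iff.mpr (by simpa [one_div, add_comm] using C.hpq)

instance factLeQ (C : Ctx Ω) : Fact (1 ≤ C.q) := ⟨ENNReal.HolderTriple.le C.q C.p 1⟩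

def pairingL {C : Ctx Ω} {w : Ω → EV C} (hw : MemLp w C.q C.P) : LpSp C →L[ℝ] ℝ :=
  (dotProductL C.d).lpPairing C.P C.q C.p (hw.toLp w)

lemma pairingL_apply {C : Ctx Ω} {w : Ω → EV C} (hw : MemLp w C.q C.P) (u : LpSp C) :
    pairingL hw u = pairF C w ⇑u := by
  rw [pairingL, ContinuousLinearMap.lpPairing_eq_integral, pairF]
  refine integral_congr_ae ?_
  filter_upwards [hw.coeFn_toLp] with ω hω
  simp [hω, dotProductL_apply, pairPt]

def MspSubmodule (C : Ctx Ω) (t : ℝ) : Submodule ℝ (LpSp C) where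
  carrier := Msp C t
  zero_mem' := by
    show (0 : LpSp C) ∈ Msp C t
    refine ⟨(aestronglyMeasurable_zero (m := C.F t)).congr (Lp.coeFn_zero _ _ _).symm, ?_⟩
    filter_upwards [Lp.coeFn_zero (EV C) C.p C.P] with ω h i _
    rw [h]
    rfl
  add_mem' {u v} hu hv := by
    show u + v ∈ Msp C t
    refine ⟨(hu.1.add hv.1).congr (Lp.coeFn_add u v).symm, ?_⟩
    filter_upwards [hu.2, hv.2, Lp.coeFn_add u v] with ω hu hv h i hi
    rw [h, Pi.add_apply, Pi.add_apply, hu i hi, hv i hi, add_zero]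
  smul_mem' c u hu := by
    show c • u ∈ Msp C t
    refine ⟨(hu.1.const_smul c).congr (Lp.coeFn_smul c u).symm, ?_⟩
    filter_upwards [hu.2, Lp.coeFn_smul c u] with ω hu h i hi
    rw [h, Pi.smul_apply, Pi.smul_apply, hu i hi, smul_zero]

def projTail (C : Ctx Ω) : EV C →L[ℝ] EV C :=
  ContinuousLinearMap.pi fun i => if C.em ≤ (i : ℕ) then ContinuousLinearMap.proj i else 0

lemma projTail_eq_zero_iff (C : Ctx Ω) (x : EV C) : projTail C x = 0 ↔ inM C x := by
  simp only [funext_iff, projTail, ContinuousLinearMap.pi_apply, Pi.zero_apply, inM]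
  refine forall_congr' fun i => ?_
  split_ifs with hi <;> simp [hi]

lemma isClosed_Msp (C : Ctx Ω) (t : ℝ) : IsClosed (Msp C t) := by
  have hker : {f : LpSp C | ∀ᵐ ω ∂C.P, inM C (f ω)} = (projTail C).compLpL C.p C.P ⁻¹' {0} := by
    ext f
    simp only [mem_ofPred_eq, mem_preimage, mem_singleton_iff, Lp.eq_zero_iff_ae_eq_zero]
    refine Filter.eventually_congr ?_
    filter_upwards [(projTail C).coeFn_compLpL f] with ω h
    rw [h, Pi.zero_apply, projTail_eq_zero_iff]
  have hclosed : IsClosed {f : LpSp C | ∀ᵐ ω ∂C.P, inM C (f ω)} :=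
    hker ▸ isClosed_singleton.preimage (ContinuousLinearMap.continuous _)
  exact (isComplete_aestronglyMeasurable (C.F.le t)).isClosed.inter hclosed

section Msub
variable {C : Ctx Ω} {t : ℝ}

lemma add_subset_Msp {A B : Set (LpSp C)} (hA : A ⊆ Msp C t) (hB : B ⊆ Msp C t) :
    A + B ⊆ Msp C t :=
  add_subset_iff.2 fun _ ha _ hb => (MspSubmodule C t).add_mem (hA ha) (hB hb)

lemma Msp_add_of_nonempty_subset {D : Set (LpSp C)} (hD : D ⊆ Msp C t) (hne : D.Nonempty) :
    Msp C t + D = Msp C t :=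
  (MspSubmodule C t).toAddSubgroup.coe_add_of_nonempty_subset hD hne

lemma msub_subset (H S : Set (LpSp C)) : msub C t H S ⊆ Msp C t := fun _ hx => hx.1

lemma msub_empty (H : Set (LpSp C)) : msub C t H ∅ = Msp C t := by
  ext
  simp [msub]

lemma msub_closure {H : Set (LpSp C)} (hH : IsClosed H) (S : Set (LpSp C)) :
    msub C t H (closure S) = msub C t H S := by
  ext x
  refine and_congr_right fun _ => ⟨fun h s hs => h s (subset_closure hs), fun h => ?_⟩
  exact fun s hs => closure_minimal h (hH.preimage (continuous_add_const x)) hs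

lemma isClosed_msub {H : Set (LpSp C)} (hH : IsClosed H) (S : Set (LpSp C)) :
    IsClosed (msub C t H S) := by
  have : msub C t H S = Msp C t ∩ ⋂ s ∈ S, (s + ·) ⁻¹' H := by
    ext
    simp [msub]
  rw [this]
  exact (isClosed_Msp C t).inter (isClosed_biInter fun s _ => hH.preimage (continuous_const_add s))

end Msub

section HalfSpace
variable {C : Ctx Ω} {t : ℝ} {w : Ω → EV C}

lemma GM_eq (hw : MemLp w C.q C.P) : GM C t w = Msp C t ∩ pairingL hw ⁻¹' Ici 0 := by
  ext u
  simp only [GM, G, mem_inter_iff, mem_ofPred_eq, mem_preimage, mem_Ici, pairingL_apply]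
  exact ⟨fun h => ⟨h.2, h.1.2⟩, fun h => ⟨⟨h.1.1, h.2⟩, h.1⟩⟩

lemma isClosed_GM (hw : MemLp w C.q C.P) : IsClosed (GM C t w) := by
  rw [GM_eq hw]
  exact (isClosed_Msp C t).inter (isClosed_Ici.preimage (pairingL hw).continuous)

lemma msub_GM_eq (hw : MemLp w C.q C.P) {S : Set (LpSp C)} (hS : S ⊆ Msp C t) :
    msub C t (GM C t w) S = Msp C t ∩ (-pairingL hw) ⁻¹' lowerBounds (pairingL hw '' S) := by
  ext x
  simp only [msub, GM_eq hw, mem_ofPred_eq, mem_inter_iff, mem_preimage, mem_Ici]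
  refine and_congr_right fun hx => ?_
  rw [mem_lowerBounds, forall_mem_image]
  refine forall₂_congr fun s hs => ?_
  have hsx : s + x ∈ Msp C t := (MspSubmodule C t).add_mem (hS hs) hx
  simp [hsx, neg_le_iff_add_nonneg]

lemma msub_GM_add (hw : MemLp w C.q C.P) {u₀ : LpSp C} (hu₀ : u₀ ∈ Msp C t)
    (hwu₀ : pairF C w ⇑u₀ ≠ 0) {A B : Set (LpSp C)} (hA : A ⊆ Msp C t) (hB : B ⊆ Msp C t)
    (hAne : A.Nonempty) (hBne : B.Nonempty) :
    msub C t (GM C t w) (A + B) = msub C t (GM C t w) A + msub C t (GM C t w) B := by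
  have hsurj : SurjOn (-pairingL hw) (Msp C t) univ :=
    (MspSubmodule C t).surjOn_of_apply_ne_zero _ hu₀ (by simpa [pairingL_apply] using hwu₀)
  rw [msub_GM_eq hw (add_subset_Msp hA hB), msub_GM_eq hw hA, msub_GM_eq hw hB, image_add,
    Real.lowerBounds_add (hAne.image _) (hBne.image _)]
  exact ((MspSubmodule C t).toAddSubgroup.inter_preimage_add_inter_preimage _ hsurj _ _).symm

lemma msub_GM_nonempty (hw : MemLp w C.q C.P) {B : Set (LpSp C)} (hB : B ⊆ Msp C t)
    (hdense : closure (B + GM C t w) ≠ Msp C t) : (msub C t (GM C t w) B).Nonempty := by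
  have hGM : GM C t w ⊆ Msp C t := inter_subset_right
  have hsub : closure (B + GM C t w) ⊆ Msp C t :=
    closure_minimal (add_subset_Msp hB hGM) (isClosed_Msp C t)
  obtain ⟨x, hxM, hx⟩ := exists_of_ssubset (hsub.ssubset_of_ne hdense)
  refine ⟨-x, (MspSubmodule C t).neg_mem hxM, fun b hb => ?_⟩
  have hbx : b + -x ∈ Msp C t := (MspSubmodule C t).add_mem (hB hb) ((MspSubmodule C t).neg_mem hxM)
  have hxb : x - b ∈ Msp C t := (MspSubmodule C t).sub_mem hxM (hB hb)
  by_contra hneg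
  refine hx (subset_closure ⟨b, hb, x - b, ?_, add_sub_cancel b x⟩)
  simp only [GM_eq hw, mem_inter_iff, mem_preimage, mem_Ici, map_add, map_neg, map_sub,
    hbx, hxb, true_and, not_le] at hneg ⊢
  linarith

end HalfSpace

theorem statement17_general (C : Ctx Ω) (t : ℝ) (w : Ω → EV C)
    (hw : w ∈ posDual C t (MspPos C t) \ Mperp C t)
    (A B : Set (LpSp C)) (hA : A ∈ GPlus C t) (hB : B ∈ GPlus C t)
    (hAne : closure (B + GM C t w) = Msp C t → A.Nonempty)
    (hBne : closure (A + GM C t w) = Msp C t → B.Nonempty) :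
    msub C t (GM C t w) (closure (A + B)) =
      closure (msub C t (GM C t w) A + msub C t (GM C t w) B) := by
  obtain ⟨⟨hwq, hwt, -⟩, hperp⟩ := hw
  obtain ⟨u₀, hu₀, hwu₀⟩ : ∃ u ∈ Msp C t, pairF C w ⇑u ≠ 0 := by
    by_contra! h
    exact hperp ⟨hwq, hwt, h⟩
  have hsum : msub C t (GM C t w) (A + B) = msub C t (GM C t w) A + msub C t (GM C t w) B := by
    rcases A.eq_empty_or_nonempty with rfl | hA'
    · rw [empty_add, msub_empty, Msp_add_of_nonempty_subset (msub_subset _ _)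
        (msub_GM_nonempty hwq hB.1 fun h => (hAne h).ne_empty rfl)]
    rcases B.eq_empty_or_nonempty with rfl | hB'
    · rw [add_empty, msub_empty, add_comm, Msp_add_of_nonempty_subset (msub_subset _ _)
        (msub_GM_nonempty hwq hA.1 fun h => (hBne h).ne_empty rfl)]
    exact msub_GM_add hwq hu₀ hwu₀ hA.1 hB.1 hA' hB'
  rw [← hsum, msub_closure (isClosed_GM hwq), (isClosed_msub (isClosed_GM hwq) _).closure_eq]

/-- the Minkowski subtraction from a half space distributes over closed
sums (Proposition `prop_penalty1`). -/
theorem statement17 (C : Ctx Ω) (t : ℝ) (ht0 : 0 ≤ t) (htT : t ≤ C.T) (w : Ω → EV C)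
    (hw : w ∈ posDual C t (MspPos C t) \ Mperp C t)
    (A B : Set (LpSp C)) (hA : A ∈ GPlus C t) (hB : B ∈ GPlus C t)
    (hAne : closure (B + GM C t w) = Msp C t → A.Nonempty)
    (hBne : closure (A + GM C t w) = Msp C t → B.Nonempty) :
    msub C t (GM C t w) (closure (A + B)) =
      closure (msub C t (GM C t w) A + msub C t (GM C t w) B) :=
  statement17_general C t w hw A B hA hB hAne hBne

end MultiRisk
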